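/- There is an absolute constant c such that for every m ≥ 1 and all m×m Boolean matrices A and B, the size of the grammar G (the sum of the lengths of all its productions) is at most c·m². More precisely, G has at most 2(3d+6) W-rules, at most (d²+1)² S-rules, at most m² A-rules, at most m² B-rules, and at most (d²+1)³ C-rules, where d = ⌈m^(1/3)⌉, each production having right-hand side of length at most 3. -/

import Mathlib

/-!
Every production of `G` has a right-hand side of length at most `3`, so the size of `G` is at most
four times its number of productions. There are `O(d)` W-rules, at most one A-rule and one B-rule
per matrix entry, and `O(d⁶)` S- and C-rules; since `d = ⌈m^(1/3)⌉ ≤ 2 m^(1/3)` we have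
`d³ ≤ 8m`, so `d⁶ = O(m²)` and the total is `O(m²)`.
-/

namespace CFGBMM

-- `T`, `Wl ℓ` and `X ℓ` are nonterminals of the Chomsky normal form `G'` of `G`; they do not
-- occur in `G`.
inductive NT : Type where
  | S : NT
  | T : NT
  | W : NT
  | Wl : ℕ → NT
  | X : ℕ → NT
  | A : ℕ → ℕ → NT
  | B : ℕ → ℕ → NT
  | C : ℕ → ℕ → NT
deriving DecidableEq

abbrev Sym : Type := Symbol ℕ NT

noncomputable def dOf (m : ℕ) : ℕ := ⌈(m : ℝ) ^ ((1 : ℝ) / 3)⌉₊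

-- The terminal `w_ℓ` is encoded as the natural number `ℓ`.
def seg (l r : ℕ) : List Sym := (List.range' l (r + 1 - l)).map Symbol.terminal

def WRules (d : ℕ) : Set (ContextFreeRule ℕ NT) :=
  {r | ∃ l, 1 ≤ l ∧ l ≤ 3 * d + 6 ∧
    (r = ⟨NT.W, [Symbol.terminal l, Symbol.nonterminal NT.W]⟩ ∨
     r = ⟨NT.W, [Symbol.terminal l]⟩)}

-- `A_{i₁,j₁} → w_{i₂} W w_{j₂+δ}` with `i₁ = i / d`, `i₂ = i % d + 2` and `δ = d + 2`.
def ARules (m d : ℕ) (a : ℕ → ℕ → ℕ) : Set (ContextFreeRule ℕ NT) :=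
  {r | ∃ i j, 1 ≤ i ∧ i ≤ m ∧ 1 ≤ j ∧ j ≤ m ∧ a i j = 1 ∧
    r = ⟨NT.A (i / d) (j / d),
      [Symbol.terminal (i % d + 2), Symbol.nonterminal NT.W,
       Symbol.terminal (j % d + 2 + (d + 2))]⟩}

def BRules (m d : ℕ) (b : ℕ → ℕ → ℕ) : Set (ContextFreeRule ℕ NT) :=
  {r | ∃ i j, 1 ≤ i ∧ i ≤ m ∧ 1 ≤ j ∧ j ≤ m ∧ b i j = 1 ∧
    r = ⟨NT.B (i / d) (j / d),
      [Symbol.terminal (i % d + 2 + 1 + (d + 2)), Symbol.nonterminal NT.W,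
       Symbol.terminal (j % d + 2 + 2 * (d + 2))]⟩}

def CRules (d : ℕ) : Set (ContextFreeRule ℕ NT) :=
  {r | ∃ p q t, p ≤ d ^ 2 ∧ q ≤ d ^ 2 ∧ t ≤ d ^ 2 ∧
    r = ⟨NT.C p q, [Symbol.nonterminal (NT.A p t), Symbol.nonterminal (NT.B t q)]⟩}

def SRules (d : ℕ) : Set (ContextFreeRule ℕ NT) :=
  {r | ∃ p q, p ≤ d ^ 2 ∧ q ≤ d ^ 2 ∧
    r = ⟨NT.S, [Symbol.nonterminal NT.W, Symbol.nonterminal (NT.C p q),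
      Symbol.nonterminal NT.W]⟩}

def RulesG (m d : ℕ) (a b : ℕ → ℕ → ℕ) : Set (ContextFreeRule ℕ NT) :=
  WRules d ∪ ARules m d a ∪ BRules m d b ∪ CRules d ∪ SRules d

noncomputable def gsize (R : Set (ContextFreeRule ℕ NT)) : ℕ :=
  ∑ᶠ r ∈ R, (1 + r.output.length)

def ntsOf (R : Set (ContextFreeRule ℕ NT)) : Set NT :=
  {n | ∃ r ∈ R, r.input = n ∨ Symbol.nonterminal n ∈ r.output}

-- No finiteness assumption is needed: both sides vanish on an infinite rule set.
theorem gsize_le_mul_ncard {R : Set (ContextFreeRule ℕ NT)} {k : ℕ}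
    (hR : ∀ r ∈ R, r.output.length ≤ k) : gsize R ≤ (k + 1) * R.ncard := by
  obtain hinf | hfin := R.infinite_or_finite
  · have hsupp : (Function.support fun r : ContextFreeRule ℕ NT => 1 + r.output.length) =
        Set.univ :=
      Function.support_eq_univ fun r => by omega
    rw [gsize, finsum_mem_eq_zero_of_infinite (by rwa [hsupp, Set.inter_univ])]
    exact Nat.zero_le _
  · rw [gsize, finsum_mem_eq_finite_toFinset_sum _ hfin, Set.ncard_eq_toFinset_card R hfin,
      mul_comm, ← smul_eq_mul]
    refine Finset.sum_le_card_nsmul _ _ _ fun r hr => ?_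
    have := hR r (hfin.mem_toFinset.mp hr)
    omega

theorem ncard_le_card_of_subset_image {α β : Type*} {S : Set β} (s : Finset α) (f : α → β)
    (h : S ⊆ f '' s) : S.ncard ≤ s.card :=
  (Set.ncard_le_ncard h (s.finite_toSet.image f)).trans
    ((Set.ncard_image_le s.finite_toSet).trans_eq (Set.ncard_coe_finset s))

theorem WRules_ncard_le (d : ℕ) : (WRules d).ncard ≤ 2 * (3 * d + 6) := by
  refine (ncard_le_card_of_subset_image (Finset.Icc 1 (3 * d + 6) ×ˢ Finset.univ)
    (fun lb : ℕ × Bool =>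
      ⟨NT.W, Symbol.terminal lb.1 :: if lb.2 then [Symbol.nonterminal NT.W] else []⟩)
    ?_).trans_eq (by simp [mul_comm])
  rintro r ⟨l, hl1, hl, rfl | rfl⟩
  · exact ⟨(l, true), by simp [hl1, hl], rfl⟩
  · exact ⟨(l, false), by simp [hl1, hl], rfl⟩

theorem ARules_ncard_le (m d : ℕ) (a : ℕ → ℕ → ℕ) : (ARules m d a).ncard ≤ m ^ 2 := by
  refine (ncard_le_card_of_subset_image (Finset.Icc 1 m ×ˢ Finset.Icc 1 m)
    (fun ij : ℕ × ℕ => ⟨NT.A (ij.1 / d) (ij.2 / d),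
      [Symbol.terminal (ij.1 % d + 2), Symbol.nonterminal NT.W,
       Symbol.terminal (ij.2 % d + 2 + (d + 2))]⟩) ?_).trans_eq (by simp [sq])
  rintro r ⟨i, j, hi1, him, hj1, hjm, -, rfl⟩
  exact ⟨(i, j), by simp [hi1, him, hj1, hjm], rfl⟩

theorem BRules_ncard_le (m d : ℕ) (b : ℕ → ℕ → ℕ) : (BRules m d b).ncard ≤ m ^ 2 := by
  refine (ncard_le_card_of_subset_image (Finset.Icc 1 m ×ˢ Finset.Icc 1 m)
    (fun ij : ℕ × ℕ => ⟨NT.B (ij.1 / d) (ij.2 / d),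
      [Symbol.terminal (ij.1 % d + 2 + 1 + (d + 2)), Symbol.nonterminal NT.W,
       Symbol.terminal (ij.2 % d + 2 + 2 * (d + 2))]⟩) ?_).trans_eq (by simp [sq])
  rintro r ⟨i, j, hi1, him, hj1, hjm, -, rfl⟩
  exact ⟨(i, j), by simp [hi1, him, hj1, hjm], rfl⟩

theorem CRules_ncard_le (d : ℕ) : (CRules d).ncard ≤ (d ^ 2 + 1) ^ 3 := by
  refine (ncard_le_card_of_subset_image
    (Finset.range (d ^ 2 + 1) ×ˢ Finset.range (d ^ 2 + 1) ×ˢ Finset.range (d ^ 2 + 1))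
    (fun pqt : ℕ × ℕ × ℕ => ⟨NT.C pqt.1 pqt.2.1,
      [Symbol.nonterminal (NT.A pqt.1 pqt.2.2), Symbol.nonterminal (NT.B pqt.2.2 pqt.2.1)]⟩)
    ?_).trans_eq (by simp [pow_succ, mul_assoc])
  rintro r ⟨p, q, t, hp, hq, ht, rfl⟩
  exact ⟨(p, q, t), by simp [hp, hq, ht], rfl⟩

theorem SRules_ncard_le (d : ℕ) : (SRules d).ncard ≤ (d ^ 2 + 1) ^ 2 := by
  refine (ncard_le_card_of_subset_image (Finset.range (d ^ 2 + 1) ×ˢ Finset.range (d ^ 2 + 1))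
    (fun pq : ℕ × ℕ => ⟨NT.S, [Symbol.nonterminal NT.W, Symbol.nonterminal (NT.C pq.1 pq.2),
      Symbol.nonterminal NT.W]⟩) ?_).trans_eq (by simp [sq])
  rintro r ⟨p, q, hp, hq, rfl⟩
  exact ⟨(p, q), by simp [hp, hq], rfl⟩

theorem RulesG_ncard_le (m d : ℕ) (a b : ℕ → ℕ → ℕ) :
    (RulesG m d a b).ncard ≤ (WRules d).ncard + (ARules m d a).ncard + (BRules m d b).ncard +
      (CRules d).ncard + (SRules d).ncard := by
  refine (Set.ncard_union_le _ _).trans ?_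
  gcongr
  refine (Set.ncard_union_le _ _).trans ?_
  gcongr
  refine (Set.ncard_union_le _ _).trans ?_
  gcongr
  exact Set.ncard_union_le _ _

theorem RulesG_output_length_le (m d : ℕ) (a b : ℕ → ℕ → ℕ) :
    ∀ r ∈ RulesG m d a b, r.output.length ≤ 3 := by
  rintro r ((((⟨l, -, -, rfl | rfl⟩ | ⟨i, j, -, -, -, -, -, rfl⟩) | ⟨i, j, -, -, -, -, -, rfl⟩) |
    ⟨p, q, t, -, -, -, rfl⟩) | ⟨p, q, -, -, rfl⟩) <;> simp

theorem dOf_pos {m : ℕ} (hm : 1 ≤ m) : 0 < dOf m :=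
  Nat.ceil_pos.mpr (Real.rpow_pos_of_pos (by exact_mod_cast hm) _)

theorem dOf_pow_three_le {m : ℕ} (hm : 1 ≤ m) : dOf m ^ 3 ≤ 8 * m := by
  have hx : 1 ≤ (m : ℝ) ^ ((1 : ℝ) / 3) := Real.one_le_rpow (by exact_mod_cast hm) (by norm_num)
  have hx3 : ((m : ℝ) ^ ((1 : ℝ) / 3)) ^ 3 = m := by
    rw [one_div]
    exact_mod_cast Real.rpow_inv_natCast_pow (Nat.cast_nonneg m) three_ne_zero
  have : (dOf m : ℝ) ^ 3 ≤ 8 * m := calc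
    (dOf m : ℝ) ^ 3 ≤ (2 * (m : ℝ) ^ ((1 : ℝ) / 3)) ^ 3 :=
      pow_le_pow_left₀ (Nat.cast_nonneg _) (Nat.ceil_le_two_mul (by linarith)) 3
    _ = 8 * m := by rw [mul_pow, hx3]; norm_num
  exact_mod_cast this

theorem rule_count_le_of_pow_three_le {d m : ℕ} (hd : 1 ≤ d) (hdm : d ^ 3 ≤ 8 * m) :
    2 * (3 * d + 6) + m ^ 2 + m ^ 2 + (d ^ 2 + 1) ^ 3 + (d ^ 2 + 1) ^ 2 ≤ 1170 * m ^ 2 := by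
  have hcube : (d ^ 2 + 1) ^ 3 ≤ 512 * m ^ 2 := calc
    (d ^ 2 + 1) ^ 3 ≤ (2 * d ^ 2) ^ 3 := by gcongr; nlinarith
    _ = 8 * (d ^ 3) ^ 2 := by ring
    _ ≤ 8 * (8 * m) ^ 2 := by gcongr
    _ = 512 * m ^ 2 := by ring
  have hsq : (d ^ 2 + 1) ^ 2 ≤ (d ^ 2 + 1) ^ 3 := Nat.pow_le_pow_right (by omega) (by norm_num)
  have hlin : 3 * d + 6 ≤ 72 * m ^ 2 := by
    nlinarith [Nat.le_self_pow three_ne_zero d, Nat.le_self_pow two_ne_zero m]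
  omega

/-- The grammar `G` has size `O(m²)`: there is an absolute constant `c` such
that for every `m ≥ 1` and all `m × m` Boolean matrices `A`, `B`, the sum of
the lengths of the productions of `G` is at most `c·m²`; more precisely, `G`
has at most `2(3d+6)` W-rules, `(d²+1)²` S-rules, `m²` A-rules, `m²` B-rules
and `(d²+1)³` C-rules, each with right-hand side of length at most `3`. -/
theorem grammar_size_quadratic :
    ∃ c : ℕ, ∀ m : ℕ, 1 ≤ m → ∀ a b : ℕ → ℕ → ℕ,
      (∀ i j, a i j = 0 ∨ a i j = 1) → (∀ i j, b i j = 0 ∨ b i j = 1) →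
      gsize (RulesG m (dOf m) a b) ≤ c * m ^ 2 ∧
      (WRules (dOf m)).ncard ≤ 2 * (3 * dOf m + 6) ∧
      (SRules (dOf m)).ncard ≤ ((dOf m) ^ 2 + 1) ^ 2 ∧
      (ARules m (dOf m) a).ncard ≤ m ^ 2 ∧
      (BRules m (dOf m) b).ncard ≤ m ^ 2 ∧
      (CRules (dOf m)).ncard ≤ ((dOf m) ^ 2 + 1) ^ 3 ∧
      (∀ r ∈ RulesG m (dOf m) a b, r.output.length ≤ 3) := by
  refine ⟨4 * 1170, fun m hm a b _ _ => ?_⟩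
  set d := dOf m
  have hW := WRules_ncard_le d
  have hA := ARules_ncard_le m d a
  have hB := BRules_ncard_le m d b
  have hC := CRules_ncard_le d
  have hS := SRules_ncard_le d
  have hlen := RulesG_output_length_le m d a b
  refine ⟨?_, hW, hS, hA, hB, hC, hlen⟩
  calc gsize (RulesG m d a b) ≤ (3 + 1) * (RulesG m d a b).ncard := gsize_le_mul_ncard hlen
    _ ≤ 4 * (2 * (3 * d + 6) + m ^ 2 + m ^ 2 + (d ^ 2 + 1) ^ 3 + (d ^ 2 + 1) ^ 2) := by
      have := RulesG_ncard_le m d a b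
      omega
    _ ≤ 4 * 1170 * m ^ 2 := by
      rw [mul_assoc]
      gcongr
      exact rule_count_le_of_pow_three_le (dOf_pos hm) (dOf_pow_three_le hm)

end CFGBMM
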